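/- arXiv:2110.05616 — 8 statements merged into one kernel-verified Lean document; each statement's English description precedes it below -/
import Mathlib

section
/- Let F be a field, let A, B ⊆ F be finite, disjoint, and both λ-null. Then A ∪ B is λ-null. -/
open Polynomial

/-! In `p * q` the coefficient of `X^(m + n - r)` is a sum of products `p_i q_j` with
`i + j = m + n - r`. Only `i ≤ m`, `j ≤ n` contribute, and then the deficits `m - i` and
`n - j` add up to at most `r`: either `i = m`, so `j = n - r` and `q_j = 0`, or
`1 ≤ m - i ≤ r` and `p_i = 0`. -/

/-- `A` is `l`-null: in `∏_{a ∈ A} (X - a)` the coefficients of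
`X^{|A|-1}, ..., X^{|A|-l}` vanish. -/
def IsNull {F : Type*} [Field F] (A : Finset F) (l : ℕ) : Prop :=
  ∀ r : ℕ, 1 ≤ r → r ≤ l → (∏ a ∈ A, (X - C a)).coeff (A.card - r) = 0

theorem Polynomial.coeff_mul_sub_eq_zero {R : Type*} [Semiring R] {p q : R[X]} {m n l r : ℕ}
    (hp : p.natDegree ≤ m) (hq : q.natDegree ≤ n)
    (hpl : ∀ s, 1 ≤ s → s ≤ l → p.coeff (m - s) = 0)
    (hql : ∀ s, 1 ≤ s → s ≤ l → q.coeff (n - s) = 0) (hr : 1 ≤ r) (hrl : r ≤ l) :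
    (p * q).coeff (m + n - r) = 0 := by
  rw [coeff_mul]
  refine Finset.sum_eq_zero fun ⟨i, j⟩ hij => ?_
  rw [Finset.HasAntidiagonal.mem_antidiagonal] at hij
  rcases lt_or_ge m i with hmi | him
  · rw [coeff_eq_zero_of_natDegree_lt (hp.trans_lt hmi), zero_mul]
  rcases lt_or_ge n j with hnj | hjn
  · rw [coeff_eq_zero_of_natDegree_lt (hq.trans_lt hnj), mul_zero]
  rcases him.eq_or_lt with rfl | him
  · rw [show j = n - r by omega, hql r hr hrl, mul_zero]
  · rw [show i = m - (m - i) by omega, hpl (m - i) (by omega) (by omega), zero_mul]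

theorem isNull_union {F : Type*} [Field F] [DecidableEq F]
    (A B : Finset F) (hdisj : Disjoint A B) (l : ℕ)
    (hA : IsNull A l) (hB : IsNull B l) :
    IsNull (A ∪ B) l := by
  intro r hr hrl
  rw [Finset.card_union_of_disjoint hdisj, Finset.prod_union hdisj]
  exact coeff_mul_sub_eq_zero (natDegree_finsetProd_X_sub_C_eq_card A fun a => a).le
    (natDegree_finsetProd_X_sub_C_eq_card B fun b => b).le hA hB hr hrl
end

section
/- Let F be a field of characteristic p > 0 and A ⊆ F a coset of a finite additive subgroup with |A| > 1. Then p_r(A) = Σ_{a∈A} a^r = 0 for all 1 ≤ r ≤ |A|−2, but p_{|A|−1}(A) ≠ 0. -/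
/-!
Translating a coset `A = t + H` by an element of `H` permutes it, so the Lagrange weight
`∏_{b ∈ A, b ≠ a} (a - b)` is the same nonzero constant `c` for every node `a ∈ A`. Reading off
the coefficient of `X ^ (|A| - 1)` in the Lagrange interpolation of `X ^ r` on the nodes `A`
(`r < |A|`) gives `∑_{a ∈ A} a ^ r / c = [r = |A| - 1]`.
-/

open Finset Polynomial

section Coset

variable {G : Type*} [AddCommGroup G] {H : AddSubgroup G} {t : G} {A : Finset G}

theorem mem_iff_sub_mem_of_coe_eq_image_add (hA : (A : Set G) = (t + ·) '' H) (x : G) :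
    x ∈ A ↔ x - t ∈ H := by
  rw [← Finset.mem_coe, hA]
  simp [sub_eq_neg_add]

theorem map_addRight_eq_self_of_coe_eq_image_add (hA : (A : Set G) = (t + ·) '' H) {h : G}
    (hh : h ∈ H) : A.map (Equiv.addRight h).toEmbedding = A := by
  ext x
  simp only [mem_map_equiv, Equiv.addRight_symm_apply, mem_iff_sub_mem_of_coe_eq_image_add hA]
  rw [show x + -h - t = x - t + -h by abel]
  exact add_mem_cancel_right (neg_mem hh)

end Coset

section Weights

variable {R : Type*} [CommRing R] [DecidableEq R]

theorem Finset.prod_erase_add_sub_eq_of_map_addRight (A : Finset R) {d : R}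
    (hd : A.map (Equiv.addRight d).toEmbedding = A) (a : R) :
    ∏ b ∈ A.erase (a + d), (a + d - b) = ∏ b ∈ A.erase a, (a - b) := by
  have : A.erase (a + d) = (A.erase a).map (Equiv.addRight d).toEmbedding := by
    rw [map_erase, hd]
    rfl
  rw [this, prod_map]
  simp

theorem prod_erase_sub_eq_of_coe_eq_image_add {H : AddSubgroup R} {t : R} {A : Finset R}
    (hA : (A : Set R) = (t + ·) '' H) {a₁ a₂ : R} (h₁ : a₁ ∈ A) (h₂ : a₂ ∈ A) :
    ∏ b ∈ A.erase a₂, (a₂ - b) = ∏ b ∈ A.erase a₁, (a₁ - b) := by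
  rw [mem_iff_sub_mem_of_coe_eq_image_add hA] at h₁ h₂
  have hd : a₂ - a₁ ∈ H := by simpa using sub_mem h₂ h₁
  have := A.prod_erase_add_sub_eq_of_map_addRight
    (map_addRight_eq_self_of_coe_eq_image_add hA hd) a₁
  rwa [add_sub_cancel] at this

theorem Finset.prod_erase_sub_ne_zero [IsDomain R] (A : Finset R) (a : R) :
    ∏ b ∈ A.erase a, (a - b) ≠ 0 :=
  prod_ne_zero_iff.mpr fun _ hb => sub_ne_zero.mpr (ne_of_mem_erase hb).symm

end Weights

section Field

variable {F : Type*} [Field F] [DecidableEq F]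

theorem Finset.sum_pow_div_prod_erase_sub (A : Finset F) {r : ℕ} (hr : r < #A) :
    ∑ a ∈ A, a ^ r / ∏ b ∈ A.erase a, (a - b) = if r = #A - 1 then 1 else 0 := by
  have := Lagrange.coeff_eq_sum (s := A) (v := id) Function.injective_id.injOn
    (P := (X ^ r : F[X])) (by rw [degree_X_pow]; exact_mod_cast hr)
  simpa [coeff_X_pow, eq_comm] using this.symm

theorem sum_pow_eq_of_coe_eq_image_add {H : AddSubgroup F} {t : F} {A : Finset F}
    (hA : (A : Set F) = (t + ·) '' H) {a₀ : F} (ha₀ : a₀ ∈ A) {r : ℕ} (hr : r < #A) :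
    ∑ a ∈ A, a ^ r = if r = #A - 1 then ∏ b ∈ A.erase a₀, (a₀ - b) else 0 := by
  have := A.sum_pow_div_prod_erase_sub hr
  rw [sum_congr rfl fun a ha => by rw [prod_erase_sub_eq_of_coe_eq_image_add hA ha₀ ha],
    ← sum_div, div_eq_iff (A.prod_erase_sub_ne_zero a₀)] at this
  simpa [ite_mul] using this

end Field

theorem additive_coset_power_sums_general {F : Type*} [Field F]
    (A : Finset F)
    (hA : ∃ H : AddSubgroup F, ∃ t : F, (A : Set F) = (fun x => t + x) '' (H : Set F)) :
    (∀ r : ℕ, 1 ≤ r → r ≤ A.card - 2 → ∑ a ∈ A, a ^ r = 0) ∧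
    ∑ a ∈ A, a ^ (A.card - 1) ≠ 0 := by
  classical
  obtain ⟨H, t, hA⟩ := hA
  have ht : t ∈ A := by simp [mem_iff_sub_mem_of_coe_eq_image_add hA]
  have hpos : 0 < #A := card_pos.mpr ⟨t, ht⟩
  refine ⟨fun r hr₁ hr₂ => ?_, ?_⟩
  · rw [sum_pow_eq_of_coe_eq_image_add hA ht (by omega), if_neg (by omega)]
  · rw [sum_pow_eq_of_coe_eq_image_add hA ht (by omega), if_pos rfl]
    exact A.prod_erase_sub_ne_zero t

theorem additive_coset_power_sums {F : Type*} [Field F]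
    (p : ℕ) [hp : Fact p.Prime] [CharP F p]
    (A : Finset F)
    (hA : ∃ H : AddSubgroup F, ∃ t : F, (A : Set F) = (fun x => t + x) '' (H : Set F))
    (hcard : 1 < A.card) :
    (∀ r : ℕ, 1 ≤ r → r ≤ A.card - 2 → ∑ a ∈ A, a ^ r = 0) ∧
    ∑ a ∈ A, a ^ (A.card - 1) ≠ 0 :=
  additive_coset_power_sums_general A hA
end

section
/- Let a₁,...,a_m (m ≥ 2) be distinct elements of a field F, and let d ≥ 0 be an integer. Then Σ_{k=1}^{m} a_k^d / ∏_{j≠k}(a_k − a_j) = Σ_{i₁+...+i_m = d−m+1, i_j ≥ 0} a₁^{i₁}···a_m^{i_m}, where the right-hand side is the complete homogeneous symmetric polynomial h_{d−m+1}(a₁,...,a_m) (an empty sum, equal to 0, when d < m−1). -/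
/-!
Write `S(a; d)` for the left-hand side. Splitting `a_k^(d+1) = a_0 a_k^d + (a_k - a_0) a_k^d`
kills the `k = 0` term of the second part and cancels the factor `a_k - a_0` in the others, so
`S(a; d+1) = a_0 S(a; d) + S(a_1, …, a_{m-1}; d)`. Sorting monomials by the exponent of `a_0`
gives the same recursion `h_{r+1}(a) = a_0 h_r(a) + h_{r+1}(a_1, …, a_{m-1})`. For `d < m`,
`S(a; d)` is the coefficient of `X^(m-1)` in the Lagrange interpolant of `X^d`, i.e. `0` or `1`,
which starts the induction.
-/

open Finset

theorem Finset.Nat.sum_antidiagonalTuple_succ {M : Type*} [AddCommMonoid M] (k n : ℕ)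
    (f : (Fin (k + 1) → ℕ) → M) :
    ∑ i ∈ Nat.antidiagonalTuple (k + 1) n, f i =
      ∑ p ∈ antidiagonal n, ∑ i ∈ Nat.antidiagonalTuple k p.2, f (Fin.cons p.1 i) := by
  simp [Finset.sum, Finset.Nat.antidiagonalTuple, Multiset.Nat.antidiagonalTuple,
    List.Nat.antidiagonalTuple, Finset.HasAntidiagonal.antidiagonal, Multiset.Nat.antidiagonal,
    List.flatMap_def, List.map_flatten, List.sum_flatten, Function.comp_def]

theorem Fin.prod_univ_erase_succ {M : Type*} [CommMonoid M] {m : ℕ} (f : Fin (m + 1) → M)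
    (k : Fin m) : ∏ j ∈ univ.erase k.succ, f j = f 0 * ∏ j ∈ univ.erase k, f j.succ := by
  rw [Fin.univ_succ, cons_eq_insert, erase_insert_of_ne (Fin.succ_ne_zero k).symm,
    prod_insert (by simp)]
  congr 1
  exact (congrArg (∏ j ∈ ·, f j) (map_erase _ univ k)).symm.trans (prod_map _ _ _)

section CompleteHomogeneous

variable {R : Type*} [CommSemiring R]

def completeHomogeneous {m : ℕ} (a : Fin m → R) (r : ℕ) : R :=
  ∑ i ∈ Nat.antidiagonalTuple m r, ∏ j, a j ^ i j

@[simp]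
theorem completeHomogeneous_zero {m : ℕ} (a : Fin m → R) : completeHomogeneous a 0 = 1 := by
  simp [completeHomogeneous, Nat.antidiagonalTuple_zero_right]

@[simp]
theorem completeHomogeneous_fin_zero_succ (a : Fin 0 → R) (r : ℕ) :
    completeHomogeneous a (r + 1) = 0 := by
  simp [completeHomogeneous, Nat.antidiagonalTuple_zero_succ]

theorem completeHomogeneous_eq_sum_antidiagonal {m : ℕ} (a : Fin (m + 1) → R) (r : ℕ) :
    completeHomogeneous a r =
      ∑ p ∈ antidiagonal r, a 0 ^ p.1 * completeHomogeneous (Fin.tail a) p.2 := by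
  simp [completeHomogeneous, Nat.sum_antidiagonalTuple_succ, Fin.prod_univ_succ, mul_sum,
    Fin.tail]

theorem completeHomogeneous_succ {m : ℕ} (a : Fin (m + 1) → R) (r : ℕ) :
    completeHomogeneous a (r + 1) =
      a 0 * completeHomogeneous a r + completeHomogeneous (Fin.tail a) (r + 1) := by
  rw [completeHomogeneous_eq_sum_antidiagonal, Nat.sum_antidiagonal_succ,
    completeHomogeneous_eq_sum_antidiagonal a r, mul_sum, add_comm]
  simp [pow_succ', mul_assoc]

end CompleteHomogeneous

section PowDivDiff

variable {F : Type*} [Field F]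

def powDivDiff {m : ℕ} (a : Fin m → F) (d : ℕ) : F :=
  ∑ k, a k ^ d / ∏ j ∈ univ.erase k, (a k - a j)

@[simp]
theorem powDivDiff_fin_zero (a : Fin 0 → F) (d : ℕ) : powDivDiff a d = 0 := by
  simp [powDivDiff]

theorem powDivDiff_of_lt {m : ℕ} {a : Fin m → F} (ha : Function.Injective a) {d : ℕ}
    (hd : d < m) : powDivDiff a d = if d + 1 = m then 1 else 0 := by
  have hcoeff := Lagrange.coeff_eq_sum (s := univ) ha.injOn (P := Polynomial.X ^ d)
    (by simpa [Polynomial.degree_X_pow] using hd)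
  simp only [card_univ, Fintype.card_fin, Polynomial.coeff_X_pow, Polynomial.eval_pow,
    Polynomial.eval_X] at hcoeff
  rw [powDivDiff, ← hcoeff]
  congr 1
  exact propext (by omega)

theorem powDivDiff_succ {m : ℕ} {a : Fin (m + 1) → F} (ha : Function.Injective a) (d : ℕ) :
    powDivDiff a (d + 1) = a 0 * powDivDiff a d + powDivDiff (Fin.tail a) d := by
  have hsplit (k : Fin (m + 1)) : a k ^ (d + 1) = a 0 * a k ^ d + (a k - a 0) * a k ^ d := by
    ring
  calc powDivDiff a (d + 1)
      = a 0 * powDivDiff a d + ∑ k, (a k - a 0) * a k ^ d / ∏ j ∈ univ.erase k, (a k - a j) := by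
        simp only [powDivDiff, hsplit, add_div, sum_add_distrib, mul_sum, mul_div_assoc]
    _ = a 0 * powDivDiff a d + powDivDiff (Fin.tail a) d := by
        rw [Fin.sum_univ_succ, sub_self, zero_mul, zero_div, zero_add]
        congr 1
        refine sum_congr rfl fun k _ => ?_
        rw [Fin.prod_univ_erase_succ, mul_div_mul_left _ _ (sub_ne_zero.2 (ha.ne k.succ_ne_zero))]
        rfl

theorem powDivDiff_add {n : ℕ} {a : Fin (n + 1) → F} (ha : Function.Injective a) (r : ℕ) :
    powDivDiff a (n + r) = completeHomogeneous a r := by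
  induction r with
  | zero => simpa using powDivDiff_of_lt ha (d := n) (by omega)
  | succ r ih =>
    rw [← add_assoc, powDivDiff_succ ha, ih, completeHomogeneous_succ]
    congr 1
    cases n with
    | zero => simp
    | succ n =>
      have htail := powDivDiff_add (ha.comp (Fin.succ_injective _)) (r + 1)
      rwa [← add_assoc, add_right_comm n r 1] at htail

end PowDivDiff

theorem sylvester_identity_general {F : Type*} [Field F] (m : ℕ)
    (a : Fin m → F) (ha : Function.Injective a) (d : ℕ) :
    ∑ k : Fin m, a k ^ d / ∏ j ∈ Finset.univ.erase k, (a k - a j) =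
      (if d + 1 < m then 0 else
        ∑ i ∈ Finset.Nat.antidiagonalTuple m (d + 1 - m), ∏ j : Fin m, a j ^ i j) := by
  change powDivDiff a d = if d + 1 < m then 0 else completeHomogeneous a (d + 1 - m)
  split_ifs with hd
  · rw [powDivDiff_of_lt ha (by omega), if_neg (by omega)]
  · obtain _ | n := m
    · simp
    · obtain ⟨r, rfl⟩ := Nat.exists_eq_add_of_le (show n ≤ d by omega)
      rw [powDivDiff_add ha, show n + r + 1 - (n + 1) = r by omega]

theorem sylvester_identity {F : Type*} [Field F] (m : ℕ) (hm : 2 ≤ m)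
    (a : Fin m → F) (ha : Function.Injective a) (d : ℕ) :
    ∑ k : Fin m, a k ^ d / ∏ j ∈ Finset.univ.erase k, (a k - a j) =
      (if d + 1 < m then 0 else
        ∑ i ∈ Finset.Nat.antidiagonalTuple m (d + 1 - m), ∏ j : Fin m, a j ^ i j) :=
  sylvester_identity_general m a ha d
end

section
/- Let A₁,...,A_n be λ-null finite subsets of a field F. Suppose f ∈ F[X₁,...,X_n] contains a monomial X₁^{k₁}···X_n^{k_n} with nonzero coefficient, where k_i < |A_i| for all i and deg(f) ≤ k₁+...+k_n+λ. Then there exists a point a ∈ A₁×···×A_n with f(a) ≠ 0. -/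
open Polynomial

/-!
Each `A i` carries the functional `p ↦ ∑_{a ∈ A i} w_i(a) p(a)`, with `w_i(a)` the `X^{k_i}`
coefficient of the Lagrange basis polynomial at `a`; it reads off the `X^{k_i}` coefficient of
`p mod ∏_{a ∈ A i} (X - a)`. For `m ≤ k_i + λ` it sends `X^m` to `δ_{m k_i}`, because the
reduction of `X^m` only involves coefficients of the node polynomial that `λ`-nullity kills.
The tensor product of these functionals, a weighted sum of `f` over the grid, therefore sends
every monomial of `f` other than `X^k` to zero (by the degree bound) and returns the coefficient
of `X^k`, which is nonzero; so `f` cannot vanish on the grid.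
-/

open Finset

namespace Polynomial

variable {R : Type*} [CommRing R]

theorem coeff_X_pow_modByMonic_of_coeff_eq_zero {g : R[X]} {l k m : ℕ} (hg : g.Monic)
    (hgap : ∀ r, 1 ≤ r → r ≤ l → g.coeff (g.natDegree - r) = 0)
    (hk : k < g.natDegree) (hm : m ≤ k + l) :
    (X ^ m %ₘ g).coeff k = if m = k then 1 else 0 := by
  nontriviality R
  rcases lt_or_ge m g.natDegree with hlt | hge
  · rw [(modByMonic_eq_self_iff hg).mpr (by simpa [degree_eq_natDegree hg.ne_zero] using hlt),
      coeff_X_pow]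
    exact if_congr eq_comm rfl rfl
  have hq : (X ^ m /ₘ g).natDegree = m - g.natDegree := by
    rw [natDegree_divByMonic _ hg, natDegree_X_pow]
  have hprod : (g * (X ^ m /ₘ g)).coeff k = 0 := by
    rw [coeff_mul]
    refine sum_eq_zero fun ⟨x, y⟩ hxy => ?_
    simp only [HasAntidiagonal.mem_antidiagonal] at hxy
    by_cases hy : y ≤ m - g.natDegree
    · have := hgap (g.natDegree - x) (by omega) (by omega)
      rw [Nat.sub_sub_self (by omega)] at this
      rw [this, zero_mul]
    · rw [coeff_eq_zero_of_natDegree_lt (p := X ^ m /ₘ g) (by omega), mul_zero]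
  rw [modByMonic_eq_sub_mul_div, coeff_sub, hprod, sub_zero, coeff_X_pow,
    if_neg (by omega), if_neg (by omega)]

end Polynomial

namespace Lagrange

variable {F ι : Type*} [Field F] [DecidableEq ι]

theorem interpolate_eval_eq_modByMonic_nodal {s : Finset ι} {v : ι → F} (hvs : Set.InjOn v s)
    (p : F[X]) : interpolate s v (fun i => p.eval (v i)) = p %ₘ nodal s v := by
  refine (eq_interpolate_of_eval_eq _ hvs ?_ fun i hi => ?_).symm
  · exact degree_nodal (v := v) ▸ degree_modByMonic_lt _ nodal_monic
  · exact aeval_modByMonic_eq_self_of_root (eval_nodal_at_node hi)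

theorem sum_coeff_basis_mul_pow [DecidableEq F] (A : Finset F) (k m : ℕ) :
    ∑ a ∈ A, (Lagrange.basis A id a).coeff k * a ^ m = (X ^ m %ₘ nodal A id).coeff k := by
  rw [← interpolate_eval_eq_modByMonic_nodal (Set.injOn_id _), interpolate_apply, finsetSum_coeff]
  refine sum_congr rfl fun a _ => ?_
  rw [eval_pow, eval_X, coeff_C_mul, mul_comm, id]

end Lagrange

open Lagrange

section Grid

variable {F : Type*} [Field F]

theorem IsNull.coeff_X_pow_modByMonic_nodal {A : Finset F} {l k m : ℕ} (hA : IsNull A l)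
    (hk : k < #A) (hm : m ≤ k + l) :
    (X ^ m %ₘ nodal A id).coeff k = if m = k then 1 else 0 :=
  have hdeg : (nodal A id).natDegree = #A := natDegree_nodal
  coeff_X_pow_modByMonic_of_coeff_eq_zero nodal_monic (hdeg ▸ hA) (hdeg ▸ hk) hm

variable [DecidableEq F] {σ : Type*} [Fintype σ] [DecidableEq σ]

noncomputable def gridWeight (A : σ → Finset F) (k : σ → ℕ) (a : σ → F) : F :=
  ∏ i, (Lagrange.basis (A i) id (a i)).coeff (k i)

theorem sum_piFinset_prod_pow_mul_gridWeight (A : σ → Finset F) (k m : σ → ℕ) :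
    ∑ a ∈ Fintype.piFinset A, (∏ i, a i ^ m i) * gridWeight A k a =
      ∏ i, (X ^ m i %ₘ nodal (A i) id).coeff (k i) := by
  simp_rw [← sum_coeff_basis_mul_pow, gridWeight, ← prod_mul_distrib, prod_univ_sum, mul_comm]

theorem sum_piFinset_eval_mul_gridWeight (A : σ → Finset F) (k : σ → ℕ)
    (f : MvPolynomial σ F) :
    ∑ a ∈ Fintype.piFinset A, MvPolynomial.eval a f * gridWeight A k a =
      ∑ m ∈ f.support, f.coeff m * ∏ i, (X ^ m i %ₘ nodal (A i) id).coeff (k i) := by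
  simp_rw [MvPolynomial.eval_eq', sum_mul]
  rw [sum_comm]
  simp_rw [mul_assoc, ← mul_sum, sum_piFinset_prod_pow_mul_gridWeight]

theorem eq_of_forall_eq_or_add_lt_of_sum_le {m k : σ → ℕ} {l : ℕ}
    (h : ∀ i, m i = k i ∨ k i + l < m i) (hsum : ∑ i, m i ≤ ∑ i, k i + l) : m = k := by
  by_contra hne
  obtain ⟨j, hj⟩ := Function.ne_iff.mp hne
  have hjl : k j + l < m j := (h j).resolve_left hj
  have hrest : ∑ i ∈ univ.erase j, k i ≤ ∑ i ∈ univ.erase j, m i :=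
    sum_le_sum fun i _ => (h i).elim (fun h => h.ge) fun h => by omega
  rw [← add_sum_erase _ _ (mem_univ j), ← add_sum_erase _ _ (mem_univ j)] at hsum
  omega

theorem sum_piFinset_eval_mul_gridWeight_eq_coeff {A : σ → Finset F} {l : ℕ}
    (hnull : ∀ i, IsNull (A i) l) {k : σ → ℕ} (hk : ∀ i, k i < #(A i))
    {f : MvPolynomial σ F} (hdeg : f.totalDegree ≤ ∑ i, k i + l) :
    ∑ a ∈ Fintype.piFinset A, MvPolynomial.eval a f * gridWeight A k a =
      f.coeff (Finsupp.equivFunOnFinite.symm k) := by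
  rw [sum_piFinset_eval_mul_gridWeight, sum_eq_single (Finsupp.equivFunOnFinite.symm k)]
  · simp [(hnull _).coeff_X_pow_modByMonic_nodal (hk _) le_self_add]
  · intro m hm hne
    refine mul_eq_zero_of_right _ (by_contra fun hprod => hne ?_)
    have hfactor := prod_ne_zero_iff.mp hprod
    have hmk : ∀ i, m i = k i ∨ k i + l < m i := fun i => by
      refine (le_or_gt (m i) (k i + l)).imp (fun hle => ?_) id
      by_contra hmi
      exact hfactor i (mem_univ i) (by
        rw [(hnull i).coeff_X_pow_modByMonic_nodal (hk i) hle, if_neg hmi])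
    have hsum : ∑ i, m i ≤ ∑ i, k i + l :=
      (Finsupp.sum_fintype m _ fun _ => rfl).symm.trans_le
        ((MvPolynomial.le_totalDegree hm).trans hdeg)
    ext i
    simp [congrFun (eq_of_forall_eq_or_add_lt_of_sum_le hmk hsum) i]
  · intro hk'
    rw [MvPolynomial.notMem_support_iff.mp hk', zero_mul]

end Grid

/-- The structured Combinatorial Nullstellensatz. -/
theorem structured_combinatorial_nullstellensatz {F : Type*} [Field F]
    (n : ℕ) (A : Fin n → Finset F) (l : ℕ) (hnull : ∀ i, IsNull (A i) l)
    (f : MvPolynomial (Fin n) F) (k : Fin n → ℕ)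
    (hk : ∀ i, k i < (A i).card)
    (hcoeff : MvPolynomial.coeff (Finsupp.equivFunOnFinite.symm k) f ≠ 0)
    (hdeg : f.totalDegree ≤ (∑ i, k i) + l) :
    ∃ a : Fin n → F, (∀ i, a i ∈ A i) ∧ MvPolynomial.eval a f ≠ 0 := by
  classical
  rw [← sum_piFinset_eval_mul_gridWeight_eq_coeff hnull hk hdeg] at hcoeff
  obtain ⟨a, ha, hfa⟩ := exists_ne_zero_of_sum_ne_zero hcoeff
  exact ⟨a, Fintype.mem_piFinset.mp ha, left_ne_zero_of_mul hfa⟩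
end

section
/- Let A₁,...,A_n be subsets of a field F, each a coset of a finite multiplicative subgroup of F*, with each |A_i| > 1. Suppose f ∈ F[X₁,...,X_n] contains a monomial X₁^{k₁}···X_n^{k_n} with nonzero coefficient, where k_i < |A_i| for all i and deg(f) ≤ k₁+...+k_n + min{|A₁|,...,|A_n|} − 1. Then there exists a ∈ A₁×···×A_n with f(a) ≠ 0. -/
/-!
If `A` is a coset `gH` with `#H = m`, then every `a ∈ A` satisfies `a ^ m = g ^ m`, so
`∏ a ∈ A, (X - a) = X ^ m - g ^ m`. If `f` vanished on the grid, Alon's Nullstellensatz would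
write `f = ∑ hᵢ (Xᵢ ^ mᵢ - cᵢ)` with `deg hᵢ + mᵢ ≤ deg f < ∑ k + mᵢ`. The monomial `X ^ k` then
has coefficient zero: it cannot come from `hᵢ Xᵢ ^ mᵢ` because `kᵢ < mᵢ`, and it cannot come
from `cᵢ hᵢ` because `deg hᵢ < ∑ k`.
-/

open Finset MvPolynomial

theorem pow_card_eq_of_mem_coset {M : Type*} [CommMonoid M] {A : Finset M} {H : Subgroup Mˣ}
    {g : Mˣ} (hA : (A : Set M) = (fun h : Mˣ => ((g * h : Mˣ) : M)) '' (H : Set Mˣ))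
    {a : M} (ha : a ∈ A) : a ^ #A = (g : M) ^ #A := by
  have hinj : Function.Injective (fun h : Mˣ => ((g * h : Mˣ) : M)) :=
    fun x y hxy => mul_left_cancel (Units.ext hxy)
  have hcard : #A = Nat.card H := by
    rw [← Set.ncard_coe_finset, hA, Set.ncard_image_of_injective _ hinj]
    exact (Nat.card_coe_set_eq _).symm
  rw [← mem_coe, hA] at ha
  obtain ⟨h, hh, rfl⟩ := ha
  have hpow : h ^ Nat.card H = 1 := congrArg Subtype.val (pow_card_eq_one' (x := (⟨h, hh⟩ : H)))
  rw [hcard, ← Units.val_pow_eq_pow_val, mul_pow, hpow, mul_one, Units.val_pow_eq_pow_val]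

open Polynomial in
theorem Polynomial.prod_X_sub_C_eq_X_pow_sub_C {R : Type*} [CommRing R] [IsDomain R]
    {A : Finset R} (hA : A.Nonempty) {c : R} (h : ∀ a ∈ A, a ^ #A = c) :
    ∏ a ∈ A, (X - C a) = X ^ #A - C c := by
  have hmonic : (X ^ #A - C c : R[X]).Monic := monic_X_pow_sub_C c hA.card_pos.ne'
  refine eq_of_dvd_of_natDegree_le_of_leadingCoeff ?_ ?_ ?_
  · rw [prod_eq_multiset_prod, Multiset.prod_X_sub_C_dvd_iff_le_roots hmonic.ne_zero,
      Multiset.le_iff_subset A.nodup]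
    intro a ha
    simp [mem_roots hmonic.ne_zero, h a ha]
  · simp
  · rw [(monic_prod_of_monic _ _ fun a _ => monic_X_sub_C a).leadingCoeff, hmonic.leadingCoeff]

namespace MvPolynomial

theorem totalDegree_X_pow_sub_C {σ R : Type*} [CommRing R] [Nontrivial R]
    (i : σ) {m : ℕ} (hm : m ≠ 0) (c : R) :
    (X i ^ m - C c : MvPolynomial σ R).totalDegree = m := by
  classical
  refine le_antisymm ((totalDegree_sub_C_le _ _).trans (totalDegree_X_pow i m).le) ?_
  have hmem : Finsupp.single i m ∈ (X i ^ m - C c : MvPolynomial σ R).support := by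
    rw [mem_support_iff, coeff_sub, coeff_X_pow, coeff_C, if_pos rfl,
      if_neg (Finsupp.single_ne_zero.mpr hm).symm, sub_zero]
    exact one_ne_zero
  simpa using le_totalDegree hmem

variable {σ R : Type*} [CommRing R] [IsDomain R]

theorem prod_X_sub_C_eq_X_pow_sub_C (i : σ) {A : Finset R} (hA : A.Nonempty) {c : R}
    (h : ∀ a ∈ A, a ^ #A = c) :
    ∏ a ∈ A, (X i - C a : MvPolynomial σ R) = X i ^ #A - C c := by
  simpa [map_prod] using congrArg (Polynomial.aeval (X i : MvPolynomial σ R))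
    (Polynomial.prod_X_sub_C_eq_X_pow_sub_C hA h)

theorem coeff_X_pow_sub_C_mul_eq_zero {p : MvPolynomial σ R} {i : σ} {m : ℕ} (c : R)
    {k : σ →₀ ℕ} (hki : k i < m)
    (hdeg : ((X i ^ m - C c) * p).totalDegree < k.degree + m) :
    coeff k ((X i ^ m - C c) * p) = 0 := by
  classical
  have hm : m ≠ 0 := (Nat.zero_le _ |>.trans_lt hki).ne'
  have hXk : coeff k (X i ^ m * p) = 0 := by
    rw [X_pow_eq_monomial, coeff_monomial_mul', if_neg]
    exact fun hle => hki.not_ge (by simpa using hle i)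
  have hpk : coeff k p = 0 := by
    rcases eq_or_ne p 0 with rfl | hp
    · exact coeff_zero k
    have hdegX := totalDegree_X_pow_sub_C (σ := σ) i hm c
    have hne : (X i ^ m - C c : MvPolynomial σ R) ≠ 0 := by
      rintro h
      rw [h, totalDegree_zero] at hdegX
      exact hm hdegX.symm
    rw [totalDegree_mul_of_isDomain hne hp, hdegX] at hdeg
    refine notMem_support_iff.mp fun hk => ?_
    have : k.degree ≤ p.totalDegree := le_totalDegree hk
    omega
  rw [sub_mul, coeff_sub, hXk, coeff_C_mul, hpk, mul_zero, sub_zero]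

theorem combinatorial_nullstellensatz_exists_eval_nonzero_of_pow_card_const [Finite σ]
    (S : σ → Finset R) (hS : ∀ i, ∃ c, ∀ a ∈ S i, a ^ #(S i) = c)
    (f : MvPolynomial σ R) (k : σ →₀ ℕ) (hk : ∀ i, k i < #(S i)) (hcoeff : f.coeff k ≠ 0)
    (hdeg : ∀ i, f.totalDegree < k.degree + #(S i)) :
    ∃ x : σ → R, (∀ i, x i ∈ S i) ∧ eval x f ≠ 0 := by
  have hne : ∀ i, (S i).Nonempty := fun i => card_pos.mp ((Nat.zero_le _).trans_lt (hk i))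
  choose c hc using hS
  have hP : ∀ i, ∏ a ∈ S i, (X i - C a) = X i ^ #(S i) - C (c i) :=
    fun i => prod_X_sub_C_eq_X_pow_sub_C i (hne i) (hc i)
  by_contra! hvanish
  obtain ⟨h, hh, hf⟩ := combinatorial_nullstellensatz_exists_linearCombination S hne f hvanish
  refine hcoeff ?_
  rw [hf, Finsupp.linearCombination_apply, Finsupp.sum, coeff_sum]
  refine sum_eq_zero fun i _ => ?_
  rw [smul_eq_mul, mul_comm, hP i]
  exact coeff_X_pow_sub_C_mul_eq_zero _ (hk i) ((hP i ▸ hh i).trans_lt (hdeg i))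

end MvPolynomial

theorem combinatorial_nullstellensatz_multiplicative_general {F : Type*} [Field F]
    (n : ℕ) (hn : 0 < n) (A : Fin n → Finset F)
    (hA : ∀ i, ∃ H : Subgroup Fˣ, ∃ _ : Fintype H, ∃ g : Fˣ,
      ((A i : Set F) = (fun h : Fˣ => ((g * h : Fˣ) : F)) '' (H : Set Fˣ)))
    (f : MvPolynomial (Fin n) F) (k : Fin n → ℕ)
    (hk : ∀ i, k i < (A i).card)
    (hcoeff : MvPolynomial.coeff (Finsupp.equivFunOnFinite.symm k) f ≠ 0)
    (hdeg : f.totalDegree ≤ (∑ i, k i) + (Finset.univ.inf' ⟨⟨0, hn⟩, Finset.mem_univ _⟩ fun i => (A i).card) - 1) :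
    ∃ a : Fin n → F, (∀ i, a i ∈ A i) ∧ MvPolynomial.eval a f ≠ 0 := by
  have hconst : ∀ i, ∃ c, ∀ a ∈ A i, a ^ #(A i) = c := fun i => by
    obtain ⟨H, _, g, hg⟩ := hA i
    exact ⟨_, fun a ha => pow_card_eq_of_mem_coset hg ha⟩
  refine combinatorial_nullstellensatz_exists_eval_nonzero_of_pow_card_const A hconst f _ hk
    hcoeff fun i => ?_
  have hmin := inf'_le (fun i => #(A i)) (mem_univ i)
  have hki := hk i
  simp only [Finsupp.degree_eq_sum, Finsupp.equivFunOnFinite_symm_apply_apply]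
  omega

/-- The Combinatorial Nullstellensatz over multiplicative grids. -/
theorem combinatorial_nullstellensatz_multiplicative {F : Type*} [Field F]
    (n : ℕ) (hn : 0 < n) (A : Fin n → Finset F)
    (hA : ∀ i, ∃ H : Subgroup Fˣ, ∃ _ : Fintype H, ∃ g : Fˣ,
      ((A i : Set F) = (fun h : Fˣ => ((g * h : Fˣ) : F)) '' (H : Set Fˣ)))
    (hcard : ∀ i, 1 < (A i).card)
    (f : MvPolynomial (Fin n) F) (k : Fin n → ℕ)
    (hk : ∀ i, k i < (A i).card)
    (hcoeff : MvPolynomial.coeff (Finsupp.equivFunOnFinite.symm k) f ≠ 0)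
    (hdeg : f.totalDegree ≤ (∑ i, k i) + (Finset.univ.inf' ⟨⟨0, hn⟩, Finset.mem_univ _⟩ fun i => (A i).card) - 1) :
    ∃ a : Fin n → F, (∀ i, a i ∈ A i) ∧ MvPolynomial.eval a f ≠ 0 :=
  combinatorial_nullstellensatz_multiplicative_general n hn A hA f k hk hcoeff hdeg
end

section
/- Let F be a field of characteristic p > 0 and let A₁,...,A_n ⊆ F each be a coset of a finite additive subgroup, with each |A_i| > 1. Suppose f ∈ F[X₁,...,X_n] contains a monomial X₁^{k₁}···X_n^{k_n} with nonzero coefficient, where k_i < |A_i| for all i and deg(f) ≤ k₁+...+k_n + (1−p^{-1})·min{|A₁|,...,|A_n|} − 1. Then there exists a ∈ A₁×···×A_n with f(a) ≠ 0. -/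
/-!
The vanishing polynomial `P = ∏_{h ∈ H} (X - h)` of a finite additive subgroup `H` of a domain
satisfies `P(X + Y) = P(X) + P(Y)`: for fixed `Y` the difference has degree `< |H|` and vanishes
on `H`. Comparing the coefficients of `X ^ j * Y ^ (d - j)` gives `C(d, j) * P_d = 0`, so in
characteristic `p` Lucas' theorem leaves only coefficients at powers of `p`. Hence `q = |H|` is a
power of `p` and `P - X ^ q` has degree at most `q / p`, and so does the vanishing polynomial
`P(X - t) = P(X) - P(t)` of a coset `t + H`.

If `f` vanished on the grid, Alon's Nullstellensatz would write it as `∑ hᵢ gᵢ` with `gᵢ` the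
vanishing polynomial of `Aᵢ` and `deg (hᵢ gᵢ) ≤ deg f`. In `hᵢ gᵢ = hᵢ Xᵢ ^ qᵢ + hᵢ (gᵢ - Xᵢ ^ qᵢ)`
the first term has no monomial `X ^ k` because `kᵢ < qᵢ`, and the second has degree at most
`deg f - qᵢ + qᵢ / p < ∑ kⱼ` because `n ↦ n - n / p` is monotone. So `f` has no monomial `X ^ k`.
-/

open Finset

theorem Nat.monotone_sub_div (p : ℕ) : Monotone fun n : ℕ => n - n / p := by
  refine monotone_nat_of_le_succ fun n => ?_
  have := Nat.succ_div (a := n) (b := p)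
  split_ifs at this <;> omega

namespace Polynomial

variable {R : Type*} [CommRing R]

theorem prod_X_sub_C_comp_X_add_C_of_mem {S : Finset R} {H : AddSubgroup R}
    (hS : (S : Set R) = H) {b : R} (hb : b ∈ H) :
    (∏ s ∈ S, (X - C s)).comp (X + C b) = ∏ s ∈ S, (X - C s) := by
  have hmem : ∀ x, x ∈ S ↔ x ∈ H := fun x => by rw [← mem_coe, hS, SetLike.mem_coe]
  rw [prod_comp]
  refine prod_nbij' (· - b) (· + b) (fun s hs => ?_) (fun s hs => ?_) (fun s _ => by simp)
    (fun s _ => by simp) (fun s _ => ?_)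
  · simpa [hmem] using H.sub_mem ((hmem s).1 hs) hb
  · simpa [hmem] using H.add_mem ((hmem s).1 hs) hb
  · simp only [sub_comp, X_comp, C_comp, C_sub]; ring

theorem prod_X_sub_C_comp_X_add_C [IsDomain R] {S : Finset R} {H : AddSubgroup R}
    (hS : (S : Set R) = H) (c : R) :
    (∏ s ∈ S, (X - C s)).comp (X + C c) =
      ∏ s ∈ S, (X - C s) + C ((∏ s ∈ S, (X - C s)).eval c) := by
  set P := ∏ s ∈ S, (X - C s)
  have hmem : ∀ x, x ∈ S ↔ x ∈ H := fun x => by rw [← mem_coe, hS, SetLike.mem_coe]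
  have hP : P.Monic := monic_prod_of_monic _ _ fun s _ => monic_X_sub_C s
  have hPdeg : P.degree = #S := by simp [P, degree_prod, degree_X_sub_C]
  have hS0 : 0 < #S := card_pos.2 ⟨0, (hmem 0).2 H.zero_mem⟩
  rw [← sub_eq_iff_eq_add', ← sub_eq_zero]
  apply eq_zero_of_degree_lt_of_eval_finset_eq_zero S
  · have hPc : (P.comp (X + C c)).degree = #S := by
      rw [degree_eq_natDegree (hP.comp_X_add_C c).ne_zero, natDegree_comp, ← hPdeg,
        degree_eq_natDegree hP.ne_zero]
      simp
    have hlt : (P.comp (X + C c) - P).degree < #S :=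
      (degree_sub_lt_left (hPc.trans hPdeg.symm) (hP.comp_X_add_C c).ne_zero
        (by rw [(hP.comp_X_add_C c).leadingCoeff, hP.leadingCoeff])).trans_eq hPc
    refine (degree_sub_le _ _).trans_lt (max_lt hlt (degree_C_le.trans_lt ?_))
    exact_mod_cast hS0
  · intro b hb
    have hPb : P.eval b = 0 := by simp [P, eval_prod, prod_eq_zero hb]
    have := congrArg (eval c) (prod_X_sub_C_comp_X_add_C_of_mem hS ((hmem b).1 hb))
    simp only [eval_sub, eval_comp, eval_add, eval_X, eval_C] at this ⊢
    rw [add_comm b c, hPb, sub_zero, sub_eq_zero]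
    exact this

/-- `P(X + Y) = P(X) + P(Y)`, where `Y` is the variable of the coefficient ring `R[X]`. -/
def IsAdditive (P : R[X]) : Prop := taylor (X : R[X]) (P.map C) = P.map C + C P

theorem isAdditive_prod_X_sub_C [IsDomain R] {S : Finset R} {H : AddSubgroup R}
    (hS : (S : Set R) = H) : (∏ s ∈ S, (X - C s)).IsAdditive := by
  let SC : Finset R[X] := S.map ⟨C, C_injective⟩
  have hSC : (SC : Set R[X]) = H.map (C : R →+* R[X]).toAddMonoidHom := by simp [SC, hS]
  have hmap : (∏ s ∈ S, (X - C s)).map C = ∏ s ∈ SC, (X - C s) := by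
    simp [SC, Polynomial.map_prod]
  rw [IsAdditive, taylor_apply, hmap, prod_X_sub_C_comp_X_add_C hSC X, ← hmap, eval_map,
    eval₂_C_X]

theorem hasseDeriv_map {S : Type*} [Semiring S] (f : R →+* S) (P : R[X]) (j : ℕ) :
    hasseDeriv j (P.map f) = (hasseDeriv j P).map f := by
  ext1 n; simp [hasseDeriv_coeff]

theorem IsAdditive.choose_mul_coeff_eq_zero {P : R[X]} (hP : P.IsAdditive) {j d : ℕ}
    (hj : 0 < j) (hjd : j < d) : (d.choose j : R) * P.coeff d = 0 := by
  have := congrArg (fun Q : R[X][X] => (Q.coeff j).coeff (d - j)) hP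
  simpa [taylor_coeff, hasseDeriv_map, eval_map, hasseDeriv_coeff, coeff_C, hj.ne',
    (Nat.sub_pos_of_lt hjd).ne', Nat.sub_add_cancel hjd.le] using this

theorem IsAdditive.exists_eq_pow_of_coeff_ne_zero [NoZeroDivisors R] (p : ℕ) [Fact p.Prime]
    [CharP R p] {P : R[X]} (hP : P.IsAdditive) {d : ℕ} (hd : 0 < d) (hPd : P.coeff d ≠ 0) :
    ∃ a, d = p ^ a := by
  refine ⟨_, Choose.eq_pow_multiplicity_of_choose_modEq_zero_nat hd fun j hj => ?_⟩
  rw [Finset.mem_Icc] at hj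
  have := (mul_eq_zero.1 (hP.choose_mul_coeff_eq_zero (d := d) (j := j) (by omega) (by omega)))
  exact Nat.modEq_zero_iff_dvd.2 ((CharP.cast_eq_zero_iff R p _).1 (this.resolve_right hPd))

theorem IsAdditive.natDegree_sub_X_pow_le [IsDomain R] (p : ℕ) [Fact p.Prime] [CharP R p]
    {P : R[X]} (hP : P.IsAdditive) (hmonic : P.Monic) :
    (P - X ^ P.natDegree).natDegree ≤ P.natDegree / p := by
  have hp := (Fact.out : p.Prime).one_lt
  set q := P.natDegree
  rw [natDegree_le_iff_coeff_eq_zero]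
  intro d hd
  rw [coeff_sub, coeff_X_pow]
  rcases lt_trichotomy d q with hdq | rfl | hqd
  · rw [if_neg hdq.ne, sub_zero]
    by_contra hPd
    obtain ⟨a, rfl⟩ := hP.exists_eq_pow_of_coeff_ne_zero p ((Nat.zero_le _).trans_lt hd) hPd
    obtain ⟨e, he⟩ := hP.exists_eq_pow_of_coeff_ne_zero p (d := q) (by omega)
      (by rw [hmonic.coeff_natDegree]; exact one_ne_zero)
    rw [he, Nat.pow_lt_pow_iff_right hp] at hdq
    have : p ^ a * p ≤ q := he ▸ pow_succ p a ▸ Nat.pow_le_pow_right (by omega) hdq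
    exact hd.not_ge ((Nat.le_div_iff_mul_le (by omega)).2 this)
  · rw [if_pos rfl, hmonic.coeff_natDegree, sub_self]
  · rw [if_neg hqd.ne', coeff_eq_zero_of_natDegree_lt hqd, sub_zero]

theorem natDegree_prod_X_sub_C_sub_X_pow_card_le [IsDomain R] (p : ℕ) [Fact p.Prime] [CharP R p]
    {A : Finset R} {H : AddSubgroup R} {t : R} (hA : (A : Set R) = (t + ·) '' H) :
    ((∏ a ∈ A, (X - C a)) - X ^ #A).natDegree ≤ #A / p := by
  set B := A.map (addLeftEmbedding (-t))
  have hB : (B : Set R) = H := by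
    rw [coe_map, hA, Set.image_image]; simp
  set P := ∏ b ∈ B, (X - C b)
  have hPdeg : P.natDegree = #A := by
    rw [natDegree_prod_of_monic _ _ fun b _ => monic_X_sub_C b]; simp [B]
  have hAP : ∏ a ∈ A, (X - C a) = P + C (P.eval (-t)) := by
    rw [← prod_X_sub_C_comp_X_add_C hB, prod_comp, prod_map]
    exact prod_congr rfl fun a _ => by simp; ring
  have hPmonic : P.Monic := monic_prod_of_monic _ _ fun b _ => monic_X_sub_C b
  calc ((∏ a ∈ A, (X - C a)) - X ^ #A).natDegree
      = (P - X ^ P.natDegree + C (P.eval (-t))).natDegree := by rw [hAP, hPdeg]; ring_nf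
    _ ≤ P.natDegree / p :=
      (natDegree_add_le _ _).trans (max_le ((isAdditive_prod_X_sub_C hB).natDegree_sub_X_pow_le
        p hPmonic) (by simp))
    _ = #A / p := by rw [hPdeg]

end Polynomial

namespace MvPolynomial

variable {σ R : Type*} [CommRing R]

theorem totalDegree_aeval_X_le (Q : Polynomial R) (i : σ) :
    (Polynomial.aeval (X i : MvPolynomial σ R) Q).totalDegree ≤ Q.natDegree := by
  rw [Polynomial.aeval_eq_sum_range]
  refine (totalDegree_finsetSum _ _).trans (Finset.sup_le fun k hk => ?_)
  rw [X_pow_eq_monomial, smul_monomial, smul_eq_mul, mul_one]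
  exact (totalDegree_monomial_le _ _).trans (by simpa using Finset.mem_range_succ_iff.1 hk)

theorem totalDegree_X_sub_C [Nontrivial R] (i : σ) (s : R) :
    (X i - C s : MvPolynomial σ R).totalDegree = 1 := by
  classical
  refine le_antisymm ((totalDegree_sub_C_le _ _).trans (totalDegree_X i).le) ?_
  have hcoeff : coeff (Finsupp.single i 1) (X i - C s : MvPolynomial σ R) = 1 := by
    simp [coeff_C, (Finsupp.single_ne_zero.2 one_ne_zero).symm]
  have := le_totalDegree (mem_support_iff.2 (hcoeff.trans_ne one_ne_zero))
  rwa [Finsupp.sum_single_index rfl] at this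

theorem X_sub_C_ne_zero [Nontrivial R] (i : σ) (s : R) : (X i - C s : MvPolynomial σ R) ≠ 0 :=
  fun h => by simpa [h] using totalDegree_X_sub_C i s

variable [IsDomain R]

theorem totalDegree_prod_X_sub_C (S : Finset R) (i : σ) :
    (∏ s ∈ S, (X i - C s)).totalDegree = #S := by
  classical
  induction S using Finset.induction_on with
  | empty => simp
  | insert s S hs ih =>
    rw [prod_insert hs, totalDegree_mul_of_isDomain (X_sub_C_ne_zero i s)
      (prod_ne_zero_iff.2 fun s _ => X_sub_C_ne_zero i s), ih, totalDegree_X_sub_C,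
      card_insert_of_notMem hs, add_comm]

theorem coeff_mul_prod_X_sub_C_eq_zero {S : Finset R} {i : σ} {t : σ →₀ ℕ} (hti : t i < #S)
    (g : MvPolynomial σ R)
    (hdeg : (g * ∏ s ∈ S, (X i - C s)).totalDegree +
      ((∏ s ∈ S, (Polynomial.X - Polynomial.C s)) - Polynomial.X ^ #S).natDegree <
        t.degree + #S) :
    (g * ∏ s ∈ S, (X i - C s)).coeff t = 0 := by
  rcases eq_or_ne g 0 with rfl | hg
  · simp
  have hgdeg : (g * ∏ s ∈ S, (X i - C s)).totalDegree = g.totalDegree + #S := by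
    rw [totalDegree_mul_of_isDomain hg, totalDegree_prod_X_sub_C]
    exact prod_ne_zero_iff.2 fun s _ => X_sub_C_ne_zero i s
  set T := (∏ s ∈ S, (Polynomial.X - Polynomial.C s)) - Polynomial.X ^ #S
  have hsplit : ∏ s ∈ S, (X i - C s) = X i ^ #S + Polynomial.aeval (X i) T := by
    simp [T, map_prod]
  have hleading : (g * X i ^ #S).coeff t = 0 := by
    rw [X_pow_eq_monomial, coeff_mul_monomial', if_neg (by simpa using hti)]
  have htail : (g * Polynomial.aeval (X i) T).coeff t = 0 := by
    refine coeff_eq_zero_of_totalDegree_lt ((totalDegree_mul _ _).trans_lt ?_)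
    have := totalDegree_aeval_X_le T i
    rw [Finsupp.degree_apply] at hdeg
    omega
  rw [hsplit, mul_add, coeff_add, hleading, htail, add_zero]

variable [Finite σ]

theorem exists_eval_ne_zero_of_totalDegree_add_lt (S : σ → Finset R) (f : MvPolynomial σ R)
    (t : σ →₀ ℕ) (ht : f.coeff t ≠ 0) (htS : ∀ i, t i < #(S i))
    (hdeg : ∀ i, f.totalDegree +
      ((∏ s ∈ S i, (Polynomial.X - Polynomial.C s)) - Polynomial.X ^ #(S i)).natDegree <
        t.degree + #(S i)) :
    ∃ x : σ → R, (∀ i, x i ∈ S i) ∧ eval x f ≠ 0 := by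
  by_contra! hvanish
  obtain ⟨h, hh, hf⟩ := combinatorial_nullstellensatz_exists_linearCombination S
    (fun i => card_pos.1 ((Nat.zero_le _).trans_lt (htS i))) f hvanish
  refine ht ?_
  rw [hf, Finsupp.linearCombination_apply, Finsupp.sum, coeff_sum]
  refine sum_eq_zero fun i _ => coeff_mul_prod_X_sub_C_eq_zero (htS i) _ ?_
  rw [mul_comm]
  exact (Nat.add_le_add_right (hh i) _).trans_lt (hdeg i)

end MvPolynomial

theorem combinatorial_nullstellensatz_additive_general {F : Type*} [Field F]
    (p : ℕ) [hp : Fact p.Prime] [CharP F p]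
    (n : ℕ) (hn : 0 < n) (A : Fin n → Finset F)
    (hA : ∀ i, ∃ H : AddSubgroup F, ∃ t : F,
      ((A i : Set F) = (fun x => t + x) '' (H : Set F)))
    (f : MvPolynomial (Fin n) F) (k : Fin n → ℕ)
    (hk : ∀ i, k i < (A i).card)
    (hcoeff : MvPolynomial.coeff (Finsupp.equivFunOnFinite.symm k) f ≠ 0)
    (hdeg : f.totalDegree ≤ (∑ i, k i) +
      ((Finset.univ.inf' ⟨⟨0, hn⟩, Finset.mem_univ _⟩ fun i => (A i).card) - (Finset.univ.inf' ⟨⟨0, hn⟩, Finset.mem_univ _⟩ fun i => (A i).card) / p) - 1) :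
    ∃ a : Fin n → F, (∀ i, a i ∈ A i) ∧ MvPolynomial.eval a f ≠ 0 := by
  obtain ⟨i₀, -, hi₀⟩ := Finset.exists_mem_eq_inf' ⟨⟨0, hn⟩, Finset.mem_univ _⟩ fun i => (A i).card
  set m := Finset.univ.inf' ⟨⟨0, hn⟩, Finset.mem_univ _⟩ fun i => (A i).card
  have hm : m / p < m :=
    Nat.div_lt_self (hi₀ ▸ (Nat.zero_le _).trans_lt (hk i₀)) hp.out.one_lt
  refine MvPolynomial.exists_eval_ne_zero_of_totalDegree_add_lt A f _ hcoeff (by simpa using hk)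
    fun i => ?_
  obtain ⟨H, t, hAi⟩ := hA i
  have htail := Polynomial.natDegree_prod_X_sub_C_sub_X_pow_card_le p hAi
  have hmono : m - m / p ≤ #(A i) - #(A i) / p :=
    Nat.monotone_sub_div p (Finset.inf'_le _ (Finset.mem_univ i))
  have hdiv := Nat.div_le_self #(A i) p
  simp only [Finsupp.degree_eq_sum, Finsupp.equivFunOnFinite_symm_apply_apply] at hdeg ⊢
  omega

/-- The Combinatorial Nullstellensatz over additive grids, where the degree bound
involves `(1 - p⁻¹)·min |Aᵢ| - 1 = m - m/p - 1` for `m = min |Aᵢ|` (a power of `p`). -/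
theorem combinatorial_nullstellensatz_additive {F : Type*} [Field F]
    (p : ℕ) [hp : Fact p.Prime] [CharP F p]
    (n : ℕ) (hn : 0 < n) (A : Fin n → Finset F)
    (hA : ∀ i, ∃ H : AddSubgroup F, ∃ t : F,
      ((A i : Set F) = (fun x => t + x) '' (H : Set F)))
    (hcard : ∀ i, 1 < (A i).card)
    (f : MvPolynomial (Fin n) F) (k : Fin n → ℕ)
    (hk : ∀ i, k i < (A i).card)
    (hcoeff : MvPolynomial.coeff (Finsupp.equivFunOnFinite.symm k) f ≠ 0)
    (hdeg : f.totalDegree ≤ (∑ i, k i) +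
      ((Finset.univ.inf' ⟨⟨0, hn⟩, Finset.mem_univ _⟩ fun i => (A i).card) - (Finset.univ.inf' ⟨⟨0, hn⟩, Finset.mem_univ _⟩ fun i => (A i).card) / p) - 1) :
    ∃ a : Fin n → F, (∀ i, a i ∈ A i) ∧ MvPolynomial.eval a f ≠ 0 :=
  combinatorial_nullstellensatz_additive_general p (hp := hp) n hn A hA f k hk hcoeff hdeg
end

section
/- Let A₁,...,A_n be λ-Vandermonde finite subsets of a field F, and let f ∈ F[X₁,...,X_n] be a polynomial in which each variable appears with degree at most λ. Then Σ_{a ∈ A₁×···×A_n} f(a) = f(0)·|A₁|···|A_n| (the sizes interpreted in F). -/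
/-!
Expanding `f` into monomials and exchanging sums, the sum of the monomial `X^d` over the grid
factors as `∏ i, ∑ x ∈ A i, x ^ d i`. Since `d i ≤ l`, each factor with `d i ≠ 0` is a vanishing
power sum, so only the constant term survives, contributing `f(0) · ∏ i, |A i|`.
-/

/-- `A` is `l`-Vandermonde: the power sums `p_r(A)` vanish for `1 ≤ r ≤ l`. -/
def IsVandermonde {F : Type*} [Field F] (A : Finset F) (l : ℕ) : Prop :=
  ∀ r : ℕ, 1 ≤ r → r ≤ l → ∑ a ∈ A, a ^ r = 0

open Finset MvPolynomial

theorem sum_piFinset_eval_eq_sum_coeff_mul_prod_sum_pow {R σ : Type*} [CommSemiring R]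
    [Fintype σ] [DecidableEq σ] (A : σ → Finset R) (f : MvPolynomial σ R) :
    ∑ a ∈ Fintype.piFinset A, eval a f =
      ∑ d ∈ f.support, f.coeff d * ∏ i, ∑ x ∈ A i, x ^ d i := by
  simp only [eval_eq', prod_univ_sum, mul_sum]
  exact sum_comm

theorem prod_sum_pow_eq_zero_of_isVandermonde {F σ : Type*} [Field F] [Fintype σ]
    {A : σ → Finset F} {l : ℕ} (hA : ∀ i, IsVandermonde (A i) l) {d : σ →₀ ℕ}
    (hd : ∀ i, d i ≤ l) (hd0 : d ≠ 0) :
    ∏ i, ∑ x ∈ A i, x ^ d i = 0 := by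
  obtain ⟨i, hi⟩ := Finsupp.ne_iff.mp hd0
  exact prod_eq_zero (mem_univ i) (hA i (d i) (Nat.one_le_iff_ne_zero.mpr hi) (hd i))

theorem sum_over_vandermonde_grid {F : Type*} [Field F]
    (n : ℕ) (A : Fin n → Finset F) (l : ℕ) (hvan : ∀ i, IsVandermonde (A i) l)
    (f : MvPolynomial (Fin n) F) (hdeg : ∀ i, f.degreeOf i ≤ l) :
    ∑ a ∈ Fintype.piFinset A, MvPolynomial.eval a f =
      MvPolynomial.eval (0 : Fin n → F) f * ∏ i, ((A i).card : F) := by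
  rw [sum_piFinset_eval_eq_sum_coeff_mul_prod_sum_pow, eval_zero, constantCoeff_eq]
  have h_card : ∏ i, ((A i).card : F) = ∏ i, ∑ x ∈ A i, x ^ (0 : Fin n →₀ ℕ) i := by
    simp only [Finsupp.coe_zero, Pi.zero_apply, pow_zero, sum_const, nsmul_one]
  rw [h_card]
  refine sum_eq_single 0 (fun d hd hd0 => ?_) ?_
  · have hd_le : ∀ i, d i ≤ l := fun i => (monomial_le_degreeOf i hd).trans (hdeg i)
    rw [prod_sum_pow_eq_zero_of_isVandermonde hvan hd_le hd0, mul_zero]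
  · intro h0
    rw [notMem_support_iff.mp h0, zero_mul]
end

section
/- Let F be a field of characteristic p > 0 and let A₁,...,A_n ⊆ F be λ-Vandermonde finite subsets such that p divides each |A_i|. If f ∈ F[X₁,...,X_n] has total degree deg(f) < n(λ+1), then Σ_{a ∈ A₁×···×A_n} f(a) = 0. -/
open Finset MvPolynomial

theorem MvPolynomial.sum_piFinset_eval_eq_zero {σ R : Type*} [Fintype σ] [DecidableEq σ]
    [CommRing R] (A : σ → Finset R) (f : MvPolynomial σ R)
    (h : ∀ d ∈ f.support, ∃ i, ∑ x ∈ A i, x ^ d i = 0) :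
    ∑ a ∈ Fintype.piFinset A, eval a f = 0 := by
  simp_rw [eval_eq']
  rw [sum_comm]
  refine sum_eq_zero fun d hd => ?_
  obtain ⟨i, hi⟩ := h d hd
  rw [← mul_sum, ← prod_univ_sum (t := A) (f := fun i x => x ^ d i),
    prod_eq_zero (mem_univ i) hi, mul_zero]

theorem MvPolynomial.exists_le_of_totalDegree_lt {n : ℕ} {R : Type*} [CommSemiring R]
    {f : MvPolynomial (Fin n) R} {l : ℕ} (hdeg : f.totalDegree < n * (l + 1))
    {d : Fin n →₀ ℕ} (hd : d ∈ f.support) : ∃ i, d i ≤ l := by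
  have hsum : ∑ i, d i < ∑ _i : Fin n, (l + 1) := calc
    ∑ i, d i = d.sum fun _ e => e := (d.sum_fintype (fun _ e => e) fun _ => rfl).symm
    _ ≤ f.totalDegree := le_totalDegree hd
    _ < n * (l + 1) := hdeg
    _ = ∑ _i : Fin n, (l + 1) := by simp
  obtain ⟨i, -, hi⟩ := exists_lt_of_sum_lt hsum
  exact ⟨i, Nat.lt_succ_iff.mp hi⟩

theorem IsVandermonde.sum_pow_eq_zero {F : Type*} [Field F] {A : Finset F} {l : ℕ}
    (hA : IsVandermonde A l) (hcard : (#A : F) = 0) {r : ℕ} (hr : r ≤ l) :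
    ∑ a ∈ A, a ^ r = 0 := by
  rcases Nat.eq_zero_or_pos r with rfl | hr_pos
  · simpa using hcard
  · exact hA r hr_pos hr

theorem sum_over_vandermonde_grid_char_p_general {F : Type*} [Field F]
    (p : ℕ) [CharP F p]
    (n : ℕ) (A : Fin n → Finset F) (l : ℕ) (hvan : ∀ i, IsVandermonde (A i) l)
    (hdvd : ∀ i, p ∣ (A i).card)
    (f : MvPolynomial (Fin n) F) (hdeg : f.totalDegree < n * (l + 1)) :
    ∑ a ∈ Fintype.piFinset A, MvPolynomial.eval a f = 0 := by
  refine sum_piFinset_eval_eq_zero A f fun d hd => ?_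
  obtain ⟨i, hi⟩ := exists_le_of_totalDegree_lt hdeg hd
  exact ⟨i, (hvan i).sum_pow_eq_zero ((CharP.cast_eq_zero_iff F p _).2 (hdvd i)) hi⟩

theorem sum_over_vandermonde_grid_char_p {F : Type*} [Field F]
    (p : ℕ) [hp : Fact p.Prime] [CharP F p]
    (n : ℕ) (A : Fin n → Finset F) (l : ℕ) (hvan : ∀ i, IsVandermonde (A i) l)
    (hdvd : ∀ i, p ∣ (A i).card)
    (f : MvPolynomial (Fin n) F) (hdeg : f.totalDegree < n * (l + 1)) :
    ∑ a ∈ Fintype.piFinset A, MvPolynomial.eval a f = 0 :=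
  sum_over_vandermonde_grid_char_p_general p n A l hvan hdvd f hdeg
end
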